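/- arXiv:2506.06990 — 2 statements merged into one kernel-verified Lean document; each statement's English description precedes it below -/
import Mathlib

section
/- If a concave function F on a polytope S_2 satisfies F(P*) ≤ F(P) at every vertex P adjacent to a vertex P* (i.e., P* is D-local), then P* is a local minimizer of F on S_2 (C-local): there exists ε > 0 such that F(P*) ≤ F(P) for all P ∈ S_2 within distance ε of P*. -/
/-!
Write the vertex `P*` as the assignment matrix of a map `σ` from points to clusters, and let
`Q n k` be the adjacent vertex that reassigns point `n` to cluster `k`. Every `P ∈ S_2` satisfies
`P = P* + ∑_{k ≠ σ n} P k n • (Q n k - P*)`. The weights `P k n` with `k ≠ σ n` are entries where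
`P*` vanishes, so near `P*` they are nonnegative with total at most `1`; concavity then gives
`F P ≥ (1 - ∑ w) F P* + ∑ w F (Q n k) ≥ F P*`.
-/

open Finset

theorem ConcaveOn.le_map_add_sum_smul_sub {𝕜 E β ι : Type*} [Field 𝕜] [LinearOrder 𝕜]
    [IsStrictOrderedRing 𝕜] [AddCommGroup E] [Module 𝕜 E] [AddCommGroup β] [PartialOrder β]
    [IsOrderedAddMonoid β] [Module 𝕜 β] [IsStrictOrderedModule 𝕜 β]
    {s : Set E} {f : E → β} {t : Finset ι} {w : ι → 𝕜} {y : ι → E} {x : E}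
    (hf : ConcaveOn 𝕜 s f) (hx : x ∈ s) (hy : ∀ i ∈ t, y i ∈ s) (hfy : ∀ i ∈ t, f x ≤ f (y i))
    (hw₀ : ∀ i ∈ t, 0 ≤ w i) (hw₁ : ∑ i ∈ t, w i ≤ 1) :
    f x ≤ f (x + ∑ i ∈ t, w i • (y i - x)) := by
  have hcomb : x + ∑ i ∈ t, w i • (y i - x) = (1 - ∑ i ∈ t, w i) • x + ∑ i ∈ t, w i • y i := by
    simp only [smul_sub, sum_sub_distrib, sub_smul, one_smul, ← sum_smul]
    abel
  calc f x = (1 - ∑ i ∈ t, w i) • f x + ∑ i ∈ t, w i • f x := by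
        rw [← sum_smul, ← add_smul, sub_add_cancel, one_smul]
    _ ≤ (1 - ∑ i ∈ t, w i) • f x + ∑ i ∈ t, w i • f (y i) := by
        gcongr with i hi
        exacts [hw₀ i hi, hfy i hi]
    _ ≤ f (x + ∑ i ∈ t, w i • (y i - x)) :=
        hcomb ▸ hf.map_add_sum_le hw₀ (by ring) hy (sub_nonneg.2 hw₁) hx

variable {ι κ : Type*}

def assignment [DecidableEq κ] (σ : ι → κ) : κ → ι → ℝ := fun k n => if k = σ n then 1 else 0

theorem exists_eq_assignment [Fintype κ] [DecidableEq κ] {P : κ → ι → ℝ}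
    (hsum : ∀ n, ∑ k, P k n = 1) (h01 : ∀ k n, P k n = 0 ∨ P k n = 1) :
    ∃ σ : ι → κ, P = assignment σ := by
  have hcard : ∀ n, #{k | P k n = 1} = 1 := fun n => by
    have : ∑ k, P k n = #{k | P k n = 1} := by
      rw [card_filter, Nat.cast_sum]
      refine sum_congr rfl fun k _ => ?_
      rcases h01 k n with h | h <;> simp [h]
    exact_mod_cast this ▸ hsum n
  choose σ hσ using fun n => card_eq_one.1 (hcard n)
  refine ⟨σ, funext₂ fun k n => ?_⟩
  have hk : P k n = 1 ↔ k = σ n := by simpa using congrArg (k ∈ ·) (hσ n)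
  rcases h01 k n with h | h <;> simp [assignment, h, ← hk]

theorem assignment_apply_eq_zero_or_one [DecidableEq κ] (σ : ι → κ) (k : κ) (n : ι) :
    assignment σ k n = 0 ∨ assignment σ k n = 1 := by
  unfold assignment; split_ifs <;> simp

theorem sum_assignment_apply [Fintype κ] [DecidableEq κ] (σ : ι → κ) (n : ι) :
    ∑ k, assignment σ k n = 1 := by
  simp [assignment]

theorem assignment_nonneg [DecidableEq κ] (σ : ι → κ) (k : κ) (n : ι) : 0 ≤ assignment σ k n := by
  unfold assignment; split_ifs <;> norm_num

theorem assignment_update_apply_of_ne [DecidableEq ι] [DecidableEq κ] (σ : ι → κ) {n m : ι}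
    (k j : κ) (h : m ≠ n) :
    assignment (Function.update σ n k) j m = assignment σ j m := by
  simp [assignment, h]

theorem assignment_update_apply_ne [DecidableEq ι] [DecidableEq κ] {σ : ι → κ} {n : ι} {k : κ}
    (hk : k ≠ σ n) :
    assignment (Function.update σ n k) k n ≠ assignment σ k n := by
  simp [assignment, hk]

def offAssignment [Fintype ι] [Fintype κ] [DecidableEq κ] (σ : ι → κ) : Finset (ι × κ) :=
  univ.filter fun p => p.2 ≠ σ p.1

theorem mem_offAssignment [Fintype ι] [Fintype κ] [DecidableEq κ] {σ : ι → κ} {p : ι × κ} :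
    p ∈ offAssignment σ ↔ p.2 ≠ σ p.1 := by
  simp [offAssignment]

theorem eq_assignment_add_sum [Fintype ι] [Fintype κ] [DecidableEq ι] [DecidableEq κ]
    (P : κ → ι → ℝ) (hsum : ∀ n, ∑ k, P k n = 1) (σ : ι → κ) :
    P = assignment σ + ∑ p ∈ offAssignment σ,
      P p.2 p.1 • (assignment (Function.update σ p.1 p.2) - assignment σ) := by
  rw [offAssignment, sum_filter_of_ne fun p _ h => ?_]
  · funext j m
    simp only [Pi.add_apply, Finset.sum_apply, Pi.smul_apply, Pi.sub_apply, smul_eq_mul,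
      Fintype.sum_prod_type]
    rw [sum_eq_single m]
    · simp only [assignment, Function.update_self, mul_sub, sum_sub_distrib, mul_ite, mul_one,
        mul_zero, sum_ite_eq, mem_univ, if_true]
      split_ifs <;> simp [hsum]
    · intro n _ hn
      simp [assignment_update_apply_of_ne _ _ _ (Ne.symm hn)]
    · simp
  · contrapose! h
    rw [h, Function.update_eq_self, sub_self, smul_zero]

theorem sum_offAssignment_apply_le_card_mul_dist [Fintype ι] [Fintype κ] [DecidableEq κ]
    (P : κ → ι → ℝ) (σ : ι → κ) :
    ∑ p ∈ offAssignment σ, P p.2 p.1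
      ≤ Fintype.card (ι × κ) * dist P (assignment σ) := by
  calc _ ≤ ∑ p ∈ offAssignment σ, dist P (assignment σ) := by
        refine sum_le_sum fun p hp => ?_
        have hzero : assignment σ p.2 p.1 = 0 := by simp [assignment, mem_offAssignment.1 hp]
        calc P p.2 p.1 ≤ dist (P p.2 p.1) (assignment σ p.2 p.1) := by
              rw [hzero, Real.dist_0_eq_abs]; exact le_abs_self _
          _ ≤ dist (P p.2) (assignment σ p.2) := dist_le_pi_dist _ _ _
          _ ≤ dist P (assignment σ) := dist_le_pi_dist _ _ _
    _ ≤ _ := by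
        rw [sum_const, nsmul_eq_mul]
        gcongr
        exact_mod_cast card_filter_le _ _

/-- If a concave function `F` on the polytope `S_2` satisfies
`F(P*) ≤ F(P)` at every vertex `P` adjacent to the vertex `P*` (D-local), then `P*`
is a local minimizer of `F` on `S_2` (C-local). -/
theorem dLocal_imp_cLocal {K N : ℕ}
    (S2 : Set (Fin K → Fin N → ℝ))
    (hS2 : S2 = {P | (∀ n, ∑ k, P k n = 1) ∧ ∀ k n, 0 ≤ P k n})
    (F : (Fin K → Fin N → ℝ) → ℝ)
    (hconc : ConcaveOn ℝ S2 F)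
    (Pstar : Fin K → Fin N → ℝ)
    (hPstarS2 : Pstar ∈ S2) (hPstar01 : ∀ k n, Pstar k n = 0 ∨ Pstar k n = 1)
    (hDlocal : ∀ P : Fin K → Fin N → ℝ,
      P ∈ S2 → (∀ k n, P k n = 0 ∨ P k n = 1) →
      (∃ n₀ : Fin N, (∀ n, n ≠ n₀ → ∀ k, P k n = Pstar k n) ∧ ∃ k, P k n₀ ≠ Pstar k n₀) →
      F Pstar ≤ F P) :
    ∃ ε > 0, ∀ P ∈ S2, dist P Pstar < ε → F Pstar ≤ F P := by
  subst hS2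
  obtain ⟨σ, rfl⟩ := exists_eq_assignment hPstarS2.1 hPstar01
  have hmem (τ : Fin N → Fin K) :
      assignment τ ∈ {P | (∀ n, ∑ k, P k n = 1) ∧ ∀ k n, 0 ≤ P k n} :=
    ⟨sum_assignment_apply τ, assignment_nonneg τ⟩
  have hadj : ∀ p ∈ offAssignment σ,
      F (assignment σ) ≤ F (assignment (Function.update σ p.1 p.2)) := fun p hp =>
    hDlocal _ (hmem _) (assignment_apply_eq_zero_or_one _)
      ⟨p.1, fun _ hn k => assignment_update_apply_of_ne σ p.2 k hn,
        p.2, assignment_update_apply_ne (mem_offAssignment.1 hp)⟩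
  set c : ℝ := (Fintype.card (Fin N × Fin K) : ℝ)
  refine ⟨1 / (c + 1), by positivity, fun P hP hdist => ?_⟩
  rw [eq_assignment_add_sum P hP.1 σ]
  refine hconc.le_map_add_sum_smul_sub (hmem σ) (fun _ _ => hmem _) hadj
    (fun _ _ => hP.2 _ _) ?_
  calc _ ≤ c * dist P (assignment σ) := sum_offAssignment_apply_le_card_mul_dist P σ
    _ ≤ c * (1 / (c + 1)) := by gcongr
    _ ≤ 1 := by rw [mul_one_div, div_le_one (by positivity)]; linarith
end

section
/- For a Bregman divergence D_φ and any nonnegative weights a_n with Σ a_n > 0 and points x_n ∈ dom(φ), the weighted mean μ = (Σ a_n x_n)/(Σ a_n) is the unique minimizer over c ∈ int dom(φ) of Σ_n a_n D_φ(x_n, c), provided μ ∈ int dom(φ). -/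
/-!
Because `μ` is the weighted mean, the linear terms cancel in the Bregman analogue of the
parallel-axis identity `∑ aₙ D(xₙ, c) = ∑ aₙ D(xₙ, μ) + (∑ aₙ) D(μ, c)`. Strict convexity of `φ`
along the segment from `c` to `μ` makes `D(μ, c) > 0` for `c ≠ μ`.
-/

open Finset

theorem StrictConvexOn.comp_affineMap_of_injective {E F : Type*} [AddCommGroup E] [Module ℝ E]
    [AddCommGroup F] [Module ℝ F] {s : Set F} {f : F → ℝ} (hf : StrictConvexOn ℝ s f)
    {g : E →ᵃ[ℝ] F} (hg : Function.Injective g) : StrictConvexOn ℝ (g ⁻¹' s) (f ∘ g) := by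
  refine ⟨hf.1.affine_preimage g, fun u hu v hv huv a b ha hb hab => ?_⟩
  simpa only [Function.comp_apply, Convex.combo_affine_apply hab] using
    hf.2 hu hv (hg.ne huv) ha hb hab

theorem StrictConvexOn.add_apply_sub_lt {E : Type*} [NormedAddCommGroup E] [NormedSpace ℝ E]
    {s : Set E} {φ : E → ℝ} (hφ : StrictConvexOn ℝ s φ) {L : E →L[ℝ] ℝ} {c y : E}
    (hL : HasFDerivAt φ L c) (hc : c ∈ s) (hy : y ∈ s) (hyc : y ≠ c) :
    φ c + L (y - c) < φ y := by
  have hline := hφ.comp_affineMap_of_injective (AffineMap.lineMap_injective ℝ hyc.symm)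
  have hderiv : HasDerivAt (φ ∘ AffineMap.lineMap (k := ℝ) c y) (L (y - c)) 0 := by
    refine HasFDerivAt.comp_hasDerivAt (0 : ℝ) ?_ AffineMap.hasDerivAt_lineMap
    simpa using hL
  have hslope := hline.lt_slope_of_hasDerivAt (x := 0) (y := 1) (by simpa using hc) (by simpa using hy)
    zero_lt_one hderiv
  rw [slope_def_field] at hslope
  simp only [Function.comp_apply, AffineMap.lineMap_apply_zero, AffineMap.lineMap_apply_one,
    sub_zero, div_one] at hslope
  linarith

section Bregman

variable {E : Type*} [NormedAddCommGroup E] [NormedSpace ℝ E]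

def bregmanDiv (φ : E → ℝ) (φ' : E → E →L[ℝ] ℝ) (x c : E) : ℝ :=
  φ x - φ c - φ' c (x - c)

theorem bregmanDiv_pos {s : Set E} {φ : E → ℝ} (hφ : StrictConvexOn ℝ s φ) {φ' : E → E →L[ℝ] ℝ}
    {x c : E} (hφc : HasFDerivAt φ (φ' c) c) (hx : x ∈ s) (hc : c ∈ s) (hxc : x ≠ c) :
    0 < bregmanDiv φ φ' x c := by
  have := hφ.add_apply_sub_lt hφc hc hx hxc
  unfold bregmanDiv
  linarith

theorem sum_mul_bregmanDiv {ι : Type*} (t : Finset ι) (φ : E → ℝ) (φ' : E → E →L[ℝ] ℝ)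
    (a : ι → ℝ) (x : ι → E) (c : E) :
    ∑ i ∈ t, a i * bregmanDiv φ φ' (x i) c =
      ∑ i ∈ t, a i * φ (x i) - (∑ i ∈ t, a i) * φ c
        - φ' c (∑ i ∈ t, a i • x i - (∑ i ∈ t, a i) • c) := by
  simp only [bregmanDiv, map_sub, map_sum, map_smul, smul_eq_mul, mul_sub, sum_sub_distrib, sum_mul]

theorem sum_mul_bregmanDiv_eq_add {ι : Type*} (t : Finset ι) (φ : E → ℝ) (φ' : E → E →L[ℝ] ℝ)
    (a : ι → ℝ) (x : ι → E) {μ : E} (hμ : (∑ i ∈ t, a i) • μ = ∑ i ∈ t, a i • x i) (c : E) :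
    ∑ i ∈ t, a i * bregmanDiv φ φ' (x i) c =
      ∑ i ∈ t, a i * bregmanDiv φ φ' (x i) μ + (∑ i ∈ t, a i) * bregmanDiv φ φ' μ c := by
  rw [sum_mul_bregmanDiv, sum_mul_bregmanDiv, ← hμ, ← smul_sub, ← smul_sub, sub_self, smul_zero,
    map_zero, map_smul, smul_eq_mul, bregmanDiv]
  ring

end Bregman

theorem bregman_weighted_mean_unique_minimizer_general {d N : ℕ}
    (dom : Set (Fin d → ℝ))
    (φ : (Fin d → ℝ) → ℝ) (hφ : StrictConvexOn ℝ dom φ)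
    (f' : (Fin d → ℝ) → (Fin d → ℝ) →L[ℝ] ℝ)
    (hdiff : ∀ y ∈ interior dom, HasFDerivAt φ (f' y) y)
    (D : (Fin d → ℝ) → (Fin d → ℝ) → ℝ)
    (hD : ∀ x y, D x y = φ x - φ y - f' y (x - y))
    (a : Fin N → ℝ) (hsum : 0 < ∑ n, a n)
    (x : Fin N → (Fin d → ℝ))
    (μ : Fin d → ℝ) (hμ : μ = (∑ n, a n)⁻¹ • ∑ n, a n • x n)
    (hμdom : μ ∈ interior dom) :
    ∀ c ∈ interior dom, c ≠ μ →
      ∑ n, a n * D (x n) μ < ∑ n, a n * D (x n) c := by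
  intro c hc hcμ
  obtain rfl : D = bregmanDiv φ f' := funext₂ hD
  rw [sum_mul_bregmanDiv_eq_add univ φ f' a x (μ := μ) (by rw [hμ, smul_inv_smul₀ hsum.ne']) c]
  exact lt_add_of_pos_right _ <| mul_pos hsum <|
    bregmanDiv_pos hφ (hdiff c hc) (interior_subset hμdom) (interior_subset hc) hcμ.symm

/-- For a Bregman divergence `D_φ`, nonnegative weights `a` with positive sum,
and points `x n ∈ dom φ`, the weighted mean `μ = (Σ a n • x n) / (Σ a n)` is the unique
minimizer over `c ∈ interior (dom φ)` of `Σ_n a n * D (x n) c`, provided `μ ∈ interior (dom φ)`. -/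
theorem bregman_weighted_mean_unique_minimizer {d N : ℕ}
    (dom : Set (Fin d → ℝ)) (hdom : Convex ℝ dom)
    (φ : (Fin d → ℝ) → ℝ) (hφ : StrictConvexOn ℝ dom φ)
    (f' : (Fin d → ℝ) → (Fin d → ℝ) →L[ℝ] ℝ)
    (hdiff : ∀ y ∈ interior dom, HasFDerivAt φ (f' y) y)
    (D : (Fin d → ℝ) → (Fin d → ℝ) → ℝ)
    (hD : ∀ x y, D x y = φ x - φ y - f' y (x - y))
    (a : Fin N → ℝ) (ha : ∀ n, 0 ≤ a n) (hsum : 0 < ∑ n, a n)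
    (x : Fin N → (Fin d → ℝ)) (hx : ∀ n, x n ∈ dom)
    (μ : Fin d → ℝ) (hμ : μ = (∑ n, a n)⁻¹ • ∑ n, a n • x n)
    (hμdom : μ ∈ interior dom) :
    ∀ c ∈ interior dom, c ≠ μ →
      ∑ n, a n * D (x n) μ < ∑ n, a n * D (x n) c :=
  bregman_weighted_mean_unique_minimizer_general dom φ hφ f' hdiff D hD a hsum x μ hμ hμdom
end
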